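/- Assume the pair (c, κ) is admissible. Then for every λ ∈ (0, π²/(4c²κ)) one has (κ+1) − (κ−1)·cosh(√λ·(1−c)) > 0, and the function λ ↦ 2κ·√λ·sinh(√λ·(1−c)) / ( (κ+1) − (κ−1)·cosh(√λ·(1−c)) ) is monotone increasing on the interval (0, π²/(4c²κ)). -/

import Mathlib

/-- The threshold `c*` for `κ > 1`. -/
noncomputable def cStar (κ : ℝ) : ℝ :=
  1 / (1 + (2 * Real.sqrt κ / Real.pi) * Real.log ((Real.sqrt κ + 1) / (Real.sqrt κ - 1)))

/-- Admissibility of the pair `(c, κ)`. -/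
def Admissible (c κ : ℝ) : Prop :=
  (0 < κ ∧ κ ≤ 1 ∧ 0 < c ∧ c < 1) ∨ (1 < κ ∧ cStar κ < c ∧ c < 1)

lemma cosh_log_ratio {s : ℝ} (hs : 1 < s) :
    Real.cosh (Real.log ((s+1)/(s-1))) = (s^2+1)/(s^2-1) := by
  have h1 : (0:ℝ) < s - 1 := by linarith
  have h2 : (0:ℝ) < s + 1 := by linarith
  have hr : 0 < (s+1)/(s-1) := div_pos h2 h1
  have hsq : s^2 - 1 ≠ 0 := by nlinarith
  rw [Real.cosh_eq, Real.exp_log hr, Real.exp_neg, Real.exp_log hr]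
  field_simp
  ring

lemma basics {c κ : ℝ} (hadm : Admissible c κ) : 0 < κ ∧ 0 < c ∧ c < 1 := by
  rcases hadm with ⟨hκ, _, hc, hc1⟩ | ⟨hκ, hcs, hc1⟩
  · exact ⟨hκ, hc, hc1⟩
  · have hκ0 : (0:ℝ) < κ := by linarith
    have hs : 1 < Real.sqrt κ := by
      rw [show (1:ℝ) = Real.sqrt 1 by simp]
      exact Real.sqrt_lt_sqrt (by norm_num) hκ
    have hr : 1 < (Real.sqrt κ + 1)/(Real.sqrt κ - 1) := by
      rw [lt_div_iff₀ (by linarith)]; linarith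
    have hL : 0 < Real.log ((Real.sqrt κ + 1)/(Real.sqrt κ - 1)) := Real.log_pos hr
    have hpi : (0:ℝ) < Real.pi := Real.pi_pos
    have hden : 0 < 1 + (2 * Real.sqrt κ / Real.pi) * Real.log ((Real.sqrt κ + 1)/(Real.sqrt κ - 1)) := by
      have : 0 < 2 * Real.sqrt κ / Real.pi := by positivity
      nlinarith
    have : 0 < cStar κ := by unfold cStar; positivity
    exact ⟨hκ0, by linarith, hc1⟩

lemma den_pos' {c κ lam : ℝ} (hadm : Admissible c κ)
    (hlam : lam ∈ Set.Ioo 0 (Real.pi ^ 2 / (4 * c ^ 2 * κ))) :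
    0 < (κ + 1) - (κ - 1) * Real.cosh (Real.sqrt lam * (1 - c)) := by
  obtain ⟨hκ0, hc, hc1⟩ := basics hadm
  rcases hadm with ⟨hκ, hκ1, _, _⟩ | ⟨hκ, hcs, _⟩
  · have h1 := Real.one_le_cosh (Real.sqrt lam * (1 - c))
    nlinarith
  · set s := Real.sqrt κ with hs_def
    have hs : 1 < s := by
      rw [hs_def, show (1:ℝ) = Real.sqrt 1 by simp]
      exact Real.sqrt_lt_sqrt (by norm_num) hκ
    have hssq : s^2 = κ := Real.sq_sqrt hκ0.le
    have hr : 1 < (s + 1)/(s - 1) := by rw [lt_div_iff₀ (by linarith)]; linarith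
    have hL : 0 < Real.log ((s + 1)/(s - 1)) := Real.log_pos hr
    set L := Real.log ((s + 1)/(s - 1)) with hL_def
    have hpi : (0:ℝ) < Real.pi := Real.pi_pos
    have hb : 0 < Real.pi / (2 * c * s) := by positivity
    have h1 : Real.sqrt lam < Real.pi / (2 * c * s) := by
      rw [show Real.pi / (2 * c * s) = Real.sqrt ((Real.pi / (2*c*s))^2) by
        rw [Real.sqrt_sq hb.le]]
      apply Real.sqrt_lt_sqrt hlam.1.le
      calc lam < Real.pi ^ 2 / (4 * c ^ 2 * κ) := hlam.2
        _ = (Real.pi / (2*c*s))^2 := by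
          rw [div_pow]; congr 1; rw [mul_pow, mul_pow, hssq]; ring
    have hdenc : 0 < 1 + (2 * s / Real.pi) * L := by
      have : 0 < 2 * s / Real.pi := by positivity
      nlinarith
    have hcs' : 1 / (1 + (2 * s / Real.pi) * L) < c := hcs
    have h2 : Real.pi * (1 - c) / (2 * c * s) < L := by
      rw [div_lt_iff₀ (by positivity)]
      have h3 : 1 < c * (1 + (2 * s / Real.pi) * L) := by
        rw [div_lt_iff₀ hdenc] at hcs'
        linarith [hcs']
      have h4 : Real.pi < c * (1 + (2 * s / Real.pi) * L) * Real.pi := by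
        nlinarith [mul_lt_mul_of_pos_right h3 hpi]
      have h5 : c * (1 + (2 * s / Real.pi) * L) * Real.pi = c * Real.pi + 2 * s * c * L := by
        field_simp
      rw [h5] at h4
      nlinarith
    have harg : Real.sqrt lam * (1 - c) < L := by
      calc Real.sqrt lam * (1 - c) < (Real.pi / (2*c*s)) * (1-c) :=
            mul_lt_mul_of_pos_right h1 (by linarith)
        _ = Real.pi * (1-c) / (2*c*s) := by ring
        _ < L := h2
    have hcosh : Real.cosh (Real.sqrt lam * (1 - c)) < Real.cosh L := by
      rw [Real.cosh_lt_cosh]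
      rw [abs_of_nonneg (mul_nonneg (Real.sqrt_nonneg lam) (by linarith)), abs_of_nonneg hL.le]
      exact harg
    have hcL : Real.cosh L = (κ+1)/(κ-1) := by
      rw [hL_def, cosh_log_ratio hs, hssq]
    rw [hcL] at hcosh
    have hκ1' : (0:ℝ) < κ - 1 := by linarith
    rw [lt_div_iff₀ hκ1'] at hcosh
    nlinarith

lemma hasDeriv_f {c κ T : ℝ}
    (hDpos : ∀ x ∈ Set.Ioo (0:ℝ) T, 0 < (κ + 1) - (κ - 1) * Real.cosh (Real.sqrt x * (1 - c))) :
    ∀ x ∈ Set.Ioo (0:ℝ) T,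
      HasDerivAt (fun lam : ℝ =>
        2 * κ * Real.sqrt lam * Real.sinh (Real.sqrt lam * (1 - c)) /
          ((κ + 1) - (κ - 1) * Real.cosh (Real.sqrt lam * (1 - c))))
        (κ * (Real.sinh (Real.sqrt x * (1-c)) * ((κ + 1) - (κ - 1) * Real.cosh (Real.sqrt x * (1-c)))
           + (1-c) * Real.sqrt x * ((κ+1) * Real.cosh (Real.sqrt x * (1-c)) - (κ-1)))
          / (Real.sqrt x * ((κ + 1) - (κ - 1) * Real.cosh (Real.sqrt x * (1-c)))^2)) x := by
  intro x hx
  have hx0 : 0 < x := hx.1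
  have ht : 0 < Real.sqrt x := Real.sqrt_pos.mpr hx0
  have hD := hDpos x hx
  have hsq := Real.hasDerivAt_sqrt hx0.ne'
  have hs1 : HasDerivAt (fun l : ℝ => Real.sqrt l * (1-c)) (1 / (2 * Real.sqrt x) * (1-c)) x :=
    hsq.mul_const _
  have hnum : HasDerivAt (fun l : ℝ => 2 * κ * Real.sqrt l * Real.sinh (Real.sqrt l * (1-c)))
      (2 * κ * (1 / (2 * Real.sqrt x)) * Real.sinh (Real.sqrt x * (1-c)) +
       2 * κ * Real.sqrt x * (Real.cosh (Real.sqrt x * (1-c)) * (1 / (2 * Real.sqrt x) * (1-c)))) x :=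
    (hsq.const_mul (2*κ)).mul hs1.sinh
  have hden : HasDerivAt (fun l : ℝ => (κ + 1) - (κ - 1) * Real.cosh (Real.sqrt l * (1-c)))
      (-((κ - 1) * (Real.sinh (Real.sqrt x * (1-c)) * (1 / (2 * Real.sqrt x) * (1-c))))) x :=
    (hs1.cosh.const_mul _).const_sub _
  have hdiv := hnum.div hden hD.ne'
  refine hdiv.congr_deriv ?_
  have hC := Real.cosh_sq_sub_sinh_sq (Real.sqrt x * (1-c))
  set t := Real.sqrt x
  set S := Real.sinh (t * (1-c))
  set C := Real.cosh (t * (1-c))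
  have hDne : (κ + 1) - (κ - 1) * C ≠ 0 := hD.ne'
  field_simp
  linear_combination (-(κ*t*(1-c)*(κ-1))/((κ+1)-(κ-1)*C)^2) * hC

theorem stmt12 (c κ : ℝ) (hadm : Admissible c κ) :
    (∀ lam ∈ Set.Ioo 0 (Real.pi ^ 2 / (4 * c ^ 2 * κ)),
      0 < (κ + 1) - (κ - 1) * Real.cosh (Real.sqrt lam * (1 - c))) ∧
    MonotoneOn (fun lam : ℝ =>
        2 * κ * Real.sqrt lam * Real.sinh (Real.sqrt lam * (1 - c)) /
          ((κ + 1) - (κ - 1) * Real.cosh (Real.sqrt lam * (1 - c))))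
      (Set.Ioo 0 (Real.pi ^ 2 / (4 * c ^ 2 * κ))) := by
  obtain ⟨hκ0, hc, hc1⟩ := basics hadm
  have hDpos : ∀ x ∈ Set.Ioo (0:ℝ) (Real.pi ^ 2 / (4 * c ^ 2 * κ)),
      0 < (κ + 1) - (κ - 1) * Real.cosh (Real.sqrt x * (1 - c)) :=
    fun x hx => den_pos' hadm hx
  refine ⟨hDpos, ?_⟩
  have hder := hasDeriv_f hDpos
  apply StrictMonoOn.monotoneOn
  apply strictMonoOn_of_deriv_pos (convex_Ioo _ _)
  · exact fun x hx => (hder x hx).continuousAt.continuousWithinAt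
  · intro x hx
    rw [interior_Ioo] at hx
    rw [(hder x hx).deriv]
    have hx0 : 0 < x := hx.1
    have ht : 0 < Real.sqrt x := Real.sqrt_pos.mpr hx0
    have hD := hDpos x hx
    have hS : 0 < Real.sinh (Real.sqrt x * (1-c)) :=
      by rw [show (0:ℝ) = Real.sinh 0 by simp]; exact Real.sinh_lt_sinh.mpr (by nlinarith)
    have hC1 : 1 ≤ Real.cosh (Real.sqrt x * (1-c)) := Real.one_le_cosh _
    apply div_pos
    · have h1 : 0 < (κ+1) * Real.cosh (Real.sqrt x * (1-c)) - (κ-1) := by nlinarith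
      have h2 : 0 < (1-c) := by linarith
      positivity
    · positivity
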